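/- arXiv:2209.08394 — 3 statements merged into one kernel-verified Lean document; each statement's English description precedes it below -/
import Mathlib

section
/- (Lemma 2.3) Let Γ be a function defined and continuous on {(x,y) ∈ ℝⁿ × ℝⁿ : x ≠ y} satisfying (i) Γ(x,y) = Γ(y,x) > 0 for all x ≠ y; (iii) sup_{y∈K} Γ(x,y) → 0 as |x| → ∞, for every compact K ⊆ ℝⁿ. Then for every x ∈ ℝⁿ and every R > 0 there exists r > 0 such that Ω_r(x) ⊆ B(x,R). -/
open MeasureTheory Filter Topology Metric

/-- The `L`-ball `Ω_r(x) := {y ≠ x : Γ(x,y) > 1/r} ∪ {x}`. -/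
def LBall {n : ℕ} (Γ : EuclideanSpace ℝ (Fin n) → EuclideanSpace ℝ (Fin n) → ℝ)
    (x : EuclideanSpace ℝ (Fin n)) (r : ℝ) : Set (EuclideanSpace ℝ (Fin n)) :=
  {y | y ≠ x ∧ 1 / r < Γ x y} ∪ {x}

/-- Lemma 2.3: under hypotheses (i) and (iii) on `Γ`, for every
`x ∈ ℝⁿ` and `R > 0` there is `r > 0` such that `Ω_r(x) ⊆ B(x,R)`. -/
theorem LBall_subset_ball {n : ℕ}
    (Γ : EuclideanSpace ℝ (Fin n) → EuclideanSpace ℝ (Fin n) → ℝ)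
    (hcont : ContinuousOn (fun p : EuclideanSpace ℝ (Fin n) × EuclideanSpace ℝ (Fin n) =>
      Γ p.1 p.2) {p | p.1 ≠ p.2})
    (hsymm : ∀ x y, x ≠ y → Γ x y = Γ y x)
    (hpos : ∀ x y, x ≠ y → 0 < Γ x y)
    (hdecay : ∀ K : Set (EuclideanSpace ℝ (Fin n)), IsCompact K →
      Tendsto (fun x => ⨆ y : K, Γ x (y : EuclideanSpace ℝ (Fin n)))
        (Filter.cocompact _) (𝓝 0))
    (x : EuclideanSpace ℝ (Fin n)) (R : ℝ) (hR : 0 < R) :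
    ∃ r : ℝ, 0 < r ∧ LBall Γ x r ⊆ ball x R := by
  -- decay at x : Γ y x → 0 as y → ∞
  have hdx : Tendsto (fun y => Γ y x) (Filter.cocompact _) (𝓝 0) := by
    have := hdecay {x} isCompact_singleton
    simpa [ciSup_unique] using this
  have hev : ∀ᶠ y in Filter.cocompact (EuclideanSpace ℝ (Fin n)), Γ y x < 1 := by
    have := hdx.eventually (eventually_lt_nhds (by norm_num : (0:ℝ) < 1))
    simpa using this
  rw [Filter.eventually_iff, Filter.mem_cocompact] at hev
  obtain ⟨K, hK, hKsub⟩ := hev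
  -- bound Γ x · on S ∩ K where S = {y | R ≤ dist y x}
  set S : Set (EuclideanSpace ℝ (Fin n)) := {y | R ≤ dist y x} with hS
  have hScl : IsClosed S := isClosed_le continuous_const (continuous_id.dist continuous_const)
  have hSK : IsCompact (S ∩ K) := hK.inter_left hScl
  have hcont' : ContinuousOn (fun y => Γ x y) (S ∩ K) := by
    have : (fun y => Γ x y) = (fun p : EuclideanSpace ℝ (Fin n) × EuclideanSpace ℝ (Fin n) => Γ p.1 p.2) ∘ (fun y => (x, y)) := rfl
    rw [this]
    apply (hcont.comp (Continuous.continuousOn (by fun_prop)) ?_)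
    intro y hy
    simp only [Set.mem_setOf_eq]
    intro hxy
    have : y ∈ S := hy.1
    rw [hS] at this
    simp only [Set.mem_setOf_eq, ← hxy, dist_self] at this
    linarith
  obtain ⟨C, hC⟩ := hSK.exists_bound_of_continuousOn hcont'
  set M : ℝ := max C 1 with hM
  have hM0 : 0 < M + 1 := by positivity
  refine ⟨1 / (M + 1), by positivity, ?_⟩
  intro y hy
  rcases hy with ⟨hyx, hΓ⟩ | hyx
  · rw [one_div_one_div] at hΓ
    by_contra hball
    have hyS : y ∈ S := by
      simp only [mem_ball] at hball
      exact not_lt.mp hball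
    have hbound : Γ x y ≤ M := by
      by_cases hyK : y ∈ K
      · calc Γ x y ≤ ‖Γ x y‖ := le_abs_self _
          _ ≤ C := hC y ⟨hyS, hyK⟩
          _ ≤ M := le_max_left _ _
      · have := hKsub (Set.mem_compl hyK)
        rw [hsymm x y (Ne.symm hyx)]
        exact le_trans this.le (le_max_right _ _)
    linarith
  · simp only [Set.mem_singleton_iff] at hyx
    subst hyx
    exact mem_ball_self hR
end

section
/- (Corollary 2.4) Let Γ be a function defined and continuous on {(x,y) ∈ ℝⁿ × ℝⁿ : x ≠ y} satisfying (i) Γ(x,y) = Γ(y,x) > 0 for all x ≠ y; (iii) sup_{y∈K} Γ(x,y) → 0 as |x| → ∞, for every compact K ⊆ ℝⁿ. Let f : ℝⁿ → ℝ be continuous. Then for every x ∈ ℝⁿ, sup_{y ∈ Ω_r(x)} |f(y) − f(x)| → 0 as r → 0⁺. -/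
open MeasureTheory Filter Topology Metric

/-! Away from `x`, the kernel `Γ x ·` is bounded: on a compact set by continuity, outside it
by the decay at infinity. So once `1 / r` exceeds that bound, the `L`-ball `Ω_r(x)` lies in
any given metric ball around `x`, and the oscillation of a continuous `f` over it is small. -/

theorem bddAbove_image_compl_ball_of_tendsto_cocompact {α : Type*} [PseudoMetricSpace α]
    {g : α → ℝ} {x : α} {δ : ℝ} (hδ : 0 < δ) (hg : ContinuousOn g {x}ᶜ)
    (hdecay : Tendsto g (cocompact α) (𝓝 0)) : BddAbove (g '' (ball x δ)ᶜ) := by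
  obtain ⟨C, hC, hC_lt⟩ :=
    hasBasis_cocompact.eventually_iff.1 (hdecay.eventually (gt_mem_nhds one_pos))
  have hcover : (ball x δ)ᶜ ⊆ (C ∩ (ball x δ)ᶜ) ∪ Cᶜ := fun y hy =>
    (em (y ∈ C)).imp (fun hyC => ⟨hyC, hy⟩) id
  have hfar : (ball x δ)ᶜ ⊆ {x}ᶜ := by
    simpa only [Set.compl_subset_compl, Set.singleton_subset_iff] using mem_ball_self hδ
  refine BddAbove.mono (Set.image_mono hcover) ?_
  rw [Set.image_union]
  refine (IsCompact.bddAbove_image ?_ (hg.mono ?_)).union ⟨1, ?_⟩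
  · exact hC.inter_right isOpen_ball.isClosed_compl
  · exact Set.inter_subset_right.trans hfar
  · rintro _ ⟨y, hy, rfl⟩
    exact (hC_lt hy).le

theorem tendsto_iSup_abs_sub_of_tendsto_smallSets {α ι : Type*} [TopologicalSpace α]
    {f : α → ℝ} {x : α} (hf : ContinuousAt f x) {s : ι → Set α} {l : Filter ι}
    (hs : Tendsto s l (𝓝 x).smallSets) :
    Tendsto (fun i => ⨆ y : s i, |f y - f x|) l (𝓝 0) := by
  rw [Metric.tendsto_nhds]
  intro ε hε
  have hnear : ∀ᶠ y in 𝓝 x, |f y - f x| ≤ ε / 2 := by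
    filter_upwards [hf.eventually (closedBall_mem_nhds (f x) (half_pos hε))] with y hy
    rwa [Real.dist_eq] at hy
  filter_upwards [tendsto_smallSets_iff.1 hs _ hnear] with i hi
  have hnonneg : 0 ≤ ⨆ y : s i, |f y - f x| := Real.iSup_nonneg fun _ => abs_nonneg _
  have hle : ⨆ y : s i, |f y - f x| ≤ ε / 2 :=
    Real.iSup_le (fun y => hi y.2) (half_pos hε).le
  rw [Real.dist_eq, sub_zero, abs_of_nonneg hnonneg]
  linarith

theorem tendsto_LBall_smallSets {n : ℕ}
    {Γ : EuclideanSpace ℝ (Fin n) → EuclideanSpace ℝ (Fin n) → ℝ} {x : EuclideanSpace ℝ (Fin n)}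
    (hcont : ContinuousOn (Γ x) {x}ᶜ) (hdecay : Tendsto (Γ x) (cocompact _) (𝓝 0)) :
    Tendsto (LBall Γ x) (𝓝[>] 0) (𝓝 x).smallSets := by
  rw [nhds_basis_ball.smallSets.tendsto_right_iff]
  intro δ hδ
  obtain ⟨M, hM⟩ := bddAbove_image_compl_ball_of_tendsto_cocompact hδ hcont hdecay
  filter_upwards [tendsto_inv_nhdsGT_zero.eventually_gt_atTop M] with r hr
  rintro y (⟨-, hy⟩ | rfl)
  · by_contra hfar
    have := hM ⟨y, hfar, rfl⟩
    rw [one_div] at hy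
    linarith
  · exact mem_ball_self hδ

theorem sup_oscillation_on_LBall_tendsto_zero_general {n : ℕ}
    (Γ : EuclideanSpace ℝ (Fin n) → EuclideanSpace ℝ (Fin n) → ℝ)
    (hcont : ContinuousOn (fun p : EuclideanSpace ℝ (Fin n) × EuclideanSpace ℝ (Fin n) =>
      Γ p.1 p.2) {p | p.1 ≠ p.2})
    (hsymm : ∀ x y, x ≠ y → Γ x y = Γ y x)
    (hdecay : ∀ K : Set (EuclideanSpace ℝ (Fin n)), IsCompact K →
      Tendsto (fun x => ⨆ y : K, Γ x (y : EuclideanSpace ℝ (Fin n)))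
        (Filter.cocompact _) (𝓝 0))
    (f : EuclideanSpace ℝ (Fin n) → ℝ) (hf : Continuous f)
    (x : EuclideanSpace ℝ (Fin n)) :
    Tendsto (fun r : ℝ => ⨆ y : LBall Γ x r, |f (y : EuclideanSpace ℝ (Fin n)) - f x|)
      (𝓝[>] 0) (𝓝 0) := by
  have hcont_x : ContinuousOn (Γ x) {x}ᶜ :=
    hcont.comp (continuousOn_const.prodMk continuousOn_id) fun _ hy => Ne.symm hy
  have hdecay_x : Tendsto (Γ x) (cocompact _) (𝓝 0) := by
    refine (hdecay {x} isCompact_singleton).congr' ?_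
    filter_upwards [isCompact_singleton.compl_mem_cocompact] with y hy
    rw [ciSup_unique]
    exact hsymm y x hy
  exact tendsto_iSup_abs_sub_of_tendsto_smallSets hf.continuousAt
    (tendsto_LBall_smallSets hcont_x hdecay_x)

/-- Corollary 2.4: under hypotheses (i) and (iii) on `Γ`, if
`f : ℝⁿ → ℝ` is continuous then, for every `x`,
`sup_{y ∈ Ω_r(x)} |f(y) − f(x)| → 0` as `r → 0⁺`. -/
theorem sup_oscillation_on_LBall_tendsto_zero {n : ℕ}
    (Γ : EuclideanSpace ℝ (Fin n) → EuclideanSpace ℝ (Fin n) → ℝ)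
    (hcont : ContinuousOn (fun p : EuclideanSpace ℝ (Fin n) × EuclideanSpace ℝ (Fin n) =>
      Γ p.1 p.2) {p | p.1 ≠ p.2})
    (hsymm : ∀ x y, x ≠ y → Γ x y = Γ y x)
    (hpos : ∀ x y, x ≠ y → 0 < Γ x y)
    (hdecay : ∀ K : Set (EuclideanSpace ℝ (Fin n)), IsCompact K →
      Tendsto (fun x => ⨆ y : K, Γ x (y : EuclideanSpace ℝ (Fin n)))
        (Filter.cocompact _) (𝓝 0))
    (f : EuclideanSpace ℝ (Fin n) → ℝ) (hf : Continuous f)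
    (x : EuclideanSpace ℝ (Fin n)) :
    Tendsto (fun r : ℝ => ⨆ y : LBall Γ x r, |f (y : EuclideanSpace ℝ (Fin n)) - f x|)
      (𝓝[>] 0) (𝓝 0) :=
  sup_oscillation_on_LBall_tendsto_zero_general Γ hcont hsymm hdecay f hf x
end

section
/- Let Γ be a function defined and continuous on {(x,y) ∈ ℝⁿ × ℝⁿ : x ≠ y} satisfying hypotheses (i)–(iv), and assume Q_r(x) > 0 for every x and r > 0. Let f : ℝⁿ → ℝ be continuous and let u : ℝⁿ → ℝ be a continuous function such that for every x ∈ ℝⁿ and every r > 0 one has the representation u(x) = M_r(u)(x) + N_r(f)(x). Then for every x ∈ ℝⁿ, the limit as r → 0⁺ of (M_r(u)(x) − u(x))/Q_r(x) exists and equals −f(x). -/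
open MeasureTheory Filter Topology Metric

/-- `N_r(w)(x) := ((α+1)/r^{α+1}) ∫₀^r ρ^α (∫_{Ω_ρ(x)} (Γ(x,y) − 1/ρ) w(y) dy) dρ`. -/
noncomputable def Nr {n : ℕ} (Γ : EuclideanSpace ℝ (Fin n) → EuclideanSpace ℝ (Fin n) → ℝ)
    (α : ℝ) (w : EuclideanSpace ℝ (Fin n) → ℝ) (x : EuclideanSpace ℝ (Fin n)) (r : ℝ) : ℝ :=
  ((α + 1) / r ^ (α + 1)) *
    ∫ ρ in (0 : ℝ)..r, ρ ^ α * ∫ y in LBall Γ x ρ, (Γ x y - 1 / ρ) * w y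

/-- `Q_r(x) := N_r(1)(x)`. -/
noncomputable def Qr {n : ℕ} (Γ : EuclideanSpace ℝ (Fin n) → EuclideanSpace ℝ (Fin n) → ℝ)
    (α : ℝ) (x : EuclideanSpace ℝ (Fin n)) (r : ℝ) : ℝ :=
  Nr Γ α (fun _ => 1) x r

set_option maxHeartbeats 1000000 in
/-- under hypotheses (i)-(iv) on `Γ`, `α > −1` and `Q_r(x) > 0`, if a
continuous `u` satisfies the representation `u(x) = M_r(u)(x) + N_r(f)(x)` for a family
of averaging operators `M_r` and a continuous `f`, then
`(M_r(u)(x) − u(x))/Q_r(x) → −f(x)` as `r → 0⁺`, at every point `x`. -/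
theorem asymptotic_average_of_representation {n : ℕ}
    (Γ : EuclideanSpace ℝ (Fin n) → EuclideanSpace ℝ (Fin n) → ℝ)
    (hcont : ContinuousOn (fun p : EuclideanSpace ℝ (Fin n) × EuclideanSpace ℝ (Fin n) =>
      Γ p.1 p.2) {p | p.1 ≠ p.2})
    (hsymm : ∀ x y, x ≠ y → Γ x y = Γ y x)
    (hpos : ∀ x y, x ≠ y → 0 < Γ x y)
    (hblow : ∀ y, Tendsto (fun x => Γ x y) (𝓝[≠] y) atTop)
    (hdecay : ∀ K : Set (EuclideanSpace ℝ (Fin n)), IsCompact K →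
      Tendsto (fun x => ⨆ y : K, Γ x (y : EuclideanSpace ℝ (Fin n)))
        (Filter.cocompact _) (𝓝 0))
    (hloc : ∀ x, LocallyIntegrable (Γ x) volume)
    (α : ℝ) (hα : -1 < α)
    (hQ : ∀ (x : EuclideanSpace ℝ (Fin n)) (r : ℝ), 0 < r → 0 < Qr Γ α x r)
    (M : ℝ → (EuclideanSpace ℝ (Fin n) → ℝ) → EuclideanSpace ℝ (Fin n) → ℝ)
    (f : EuclideanSpace ℝ (Fin n) → ℝ) (hf : Continuous f)
    (u : EuclideanSpace ℝ (Fin n) → ℝ) (hu : Continuous u)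
    (hrep : ∀ (x : EuclideanSpace ℝ (Fin n)) (r : ℝ), 0 < r →
      u x = M r u x + Nr Γ α f x r)
    (x : EuclideanSpace ℝ (Fin n)) :
    Tendsto (fun r : ℝ => (M r u x - u x) / Qr Γ α x r) (𝓝[>] 0) (𝓝 (-f x)) := by
  
  classical
  have key : ∀ ε : ℝ, 0 < ε → ∃ r1 : ℝ, 0 < r1 ∧ ∀ r : ℝ, 0 < r → r ≤ r1 →
      |Nr Γ α f x r - f x * Qr Γ α x r| ≤ ε * Qr Γ α x r := by
    rcases subsingleton_or_nontrivial (EuclideanSpace ℝ (Fin n)) with hsub | hnt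
    · intro ε hε
      refine ⟨1, one_pos, fun r hr _ => ?_⟩
      have hfe : ∀ y, f y = f x := fun y => by rw [Subsingleton.elim y x]
      have heq : Nr Γ α f x r = f x * Qr Γ α x r := by
        simp only [Nr, Qr, mul_one]
        have h1 : ∀ ρ : ℝ, (∫ y in LBall Γ x ρ, (Γ x y - 1 / ρ) * f y)
            = (∫ y in LBall Γ x ρ, (Γ x y - 1 / ρ)) * f x := by
          intro ρ
          rw [← MeasureTheory.integral_mul_const]
          exact integral_congr_ae (Filter.Eventually.of_forall fun y => by simp [hfe])
        rw [show (∫ ρ in (0:ℝ)..r, ρ ^ α * ∫ y in LBall Γ x ρ, (Γ x y - 1 / ρ) * f y)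
            = (∫ ρ in (0:ℝ)..r, ρ ^ α * ∫ y in LBall Γ x ρ, (Γ x y - 1 / ρ)) * f x by
          rw [← intervalIntegral.integral_mul_const]
          exact intervalIntegral.integral_congr fun ρ _ => by rw [h1]; ring]
        ring
      rw [heq, sub_self, abs_zero]
      exact (mul_pos hε (hQ x r hr)).le
    · intro ε hε
      have hΓx : ContinuousOn (fun y => Γ x y) {y : EuclideanSpace ℝ (Fin n) | y ≠ x} := by
        have heq : (fun y => Γ x y)
            = (fun p : EuclideanSpace ℝ (Fin n) × EuclideanSpace ℝ (Fin n) => Γ p.1 p.2)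
              ∘ (fun y => (x, y)) := rfl
        rw [heq]
        exact hcont.comp (continuous_const.prodMk continuous_id).continuousOn
          fun y hy => Ne.symm hy
      -- smallness of L-balls
      have hsmall : ∀ δ : ℝ, 0 < δ → ∃ ρ0 : ℝ, 0 < ρ0 ∧ ∀ ρ : ℝ, 0 < ρ → ρ ≤ ρ0 →
          LBall Γ x ρ ⊆ closedBall x δ := by
        intro δ hδ
        have hd : Filter.Tendsto (fun z => Γ z x)
            (Filter.cocompact (EuclideanSpace ℝ (Fin n))) (𝓝 0) := by
          have h := hdecay {x} isCompact_singleton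
          have hfun : (fun z => ⨆ y : ({x} : Set (EuclideanSpace ℝ (Fin n))), Γ z ↑y)
              = fun z => Γ z x := by
            funext z; rw [ciSup_unique]; rfl
          rwa [hfun] at h
        have h1 := hd.eventually (eventually_lt_nhds zero_lt_one)
        rcases Filter.mem_cocompact.mp h1 with ⟨C, hC, hCsub⟩
        have hK2c : IsCompact ((C ∪ closedBall x δ) ∩ (ball x δ)ᶜ) :=
          (hC.union (isCompact_closedBall x δ)).inter_right isOpen_ball.isClosed_compl
        have hK2sub : ((C ∪ closedBall x δ) ∩ (ball x δ)ᶜ) ⊆ {y | y ≠ x} := by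
          intro y hy hyx
          exact hy.2 (by rw [hyx]; exact mem_ball_self hδ)
        obtain ⟨M1, hM1⟩ := hK2c.exists_bound_of_continuousOn (hΓx.mono hK2sub)
        have hMpos : (0:ℝ) < max M1 1 + 1 := by
          have := le_max_right M1 1; linarith
        refine ⟨(max M1 1 + 1)⁻¹, inv_pos.mpr hMpos, fun ρ hρ hρ0 y hy => ?_⟩
        rcases hy with hy | hy
        · obtain ⟨hyx, hΓy⟩ := hy
          by_contra hyB
          have hyball : y ∉ ball x δ := fun h => hyB (ball_subset_closedBall h)
          have hbound : Γ x y ≤ max M1 1 := by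
            by_cases hyC : y ∈ C ∪ closedBall x δ
            · have hmem : y ∈ (C ∪ closedBall x δ) ∩ (ball x δ)ᶜ := ⟨hyC, hyball⟩
              calc Γ x y ≤ |Γ x y| := le_abs_self _
                _ ≤ M1 := by simpa [Real.norm_eq_abs] using hM1 y hmem
                _ ≤ max M1 1 := le_max_left _ _
            · have hyC' : y ∉ C := fun h => hyC (Or.inl h)
              have h2 : Γ y x < 1 := hCsub hyC'
              rw [hsymm x y (Ne.symm hyx)]
              exact h2.le.trans (le_max_right _ _)
          have hinv : max M1 1 + 1 ≤ 1 / ρ := by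
            rw [le_div_iff₀ hρ]
            calc (max M1 1 + 1) * ρ ≤ (max M1 1 + 1) * (max M1 1 + 1)⁻¹ :=
              mul_le_mul_of_nonneg_left hρ0 hMpos.le
            _ = 1 := mul_inv_cancel₀ (ne_of_gt hMpos)
          linarith
        · rw [Set.mem_singleton_iff] at hy
          rw [hy]; exact mem_closedBall_self hδ.le
      obtain ⟨r0, hr0pos, hΩ1⟩ := hsmall 1 one_pos
      have hxne : ∀ᵐ y : EuclideanSpace ℝ (Fin n), y ≠ x := by
        have h0 : {y : EuclideanSpace ℝ (Fin n) | ¬ y ≠ x} = {x} := by ext y; simp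
        rw [ae_iff, h0]; exact measure_singleton x
      have hBmeas : MeasurableSet (closedBall x (1:ℝ)) := measurableSet_closedBall
      have hBcomp : IsCompact (closedBall x (1:ℝ)) := isCompact_closedBall x 1
      have hΓB : IntegrableOn (fun y => Γ x y) (closedBall x (1:ℝ)) :=
        (hloc x).integrableOn_isCompact hBcomp
      have hSopen : ∀ ρ : ℝ, IsOpen {y : EuclideanSpace ℝ (Fin n) | y ≠ x ∧ 1/ρ < Γ x y} := by
        intro ρ
        have heq : {y : EuclideanSpace ℝ (Fin n) | y ≠ x ∧ 1/ρ < Γ x y}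
            = {y : EuclideanSpace ℝ (Fin n) | y ≠ x} ∩ (fun y => Γ x y) ⁻¹' (Set.Ioi (1/ρ)) := by
          ext y; simp [Set.mem_Ioi]
        rw [heq]
        exact hΓx.isOpen_inter_preimage isOpen_ne isOpen_Ioi
      have hae : AEMeasurable (fun y => Γ x y) (volume.restrict (closedBall x (1:ℝ))) := by
        have h1 : AEMeasurable (fun y => Γ x y)
            (volume.restrict (closedBall x (1:ℝ) ∩ {y | y ≠ x})) :=
          (hΓx.mono Set.inter_subset_right).aemeasurable (hBmeas.inter isOpen_ne.measurableSet)
        have h2 : volume.restrict (closedBall x (1:ℝ))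
            = volume.restrict (closedBall x (1:ℝ) ∩ {y | y ≠ x}) := by
          apply Measure.restrict_congr_set
          rw [ae_eq_set]
          constructor
          · refine measure_mono_null (fun y hy => ?_) (measure_singleton x)
            have h3 := hy.2
            simp only [Set.mem_inter_iff, Set.mem_setOf_eq, not_and] at h3
            exact Set.mem_singleton_iff.mpr (not_not.mp (h3 hy.1))
          · exact measure_mono_null (fun y hy => (hy.2 hy.1.1).elim) measure_empty
        rw [h2]; exact h1
      have hAESM : ∀ (ρ : ℝ) (w : EuclideanSpace ℝ (Fin n) → ℝ), Continuous w →
          AEStronglyMeasurable (fun y => max (Γ x y - 1/ρ) 0 * w y)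
            (volume.restrict (closedBall x (1:ℝ))) := by
        intro ρ w hw
        exact (((hae.sub aemeasurable_const).max aemeasurable_const).mul
          hw.aemeasurable).aestronglyMeasurable
      have hbd : ∀ (ρ : ℝ) (w : EuclideanSpace ℝ (Fin n) → ℝ) (Cw : ℝ), 0 < ρ →
          (∀ y ∈ closedBall x (1:ℝ), ‖w y‖ ≤ Cw) →
          ∀ᵐ y ∂(volume.restrict (closedBall x (1:ℝ))),
            ‖max (Γ x y - 1/ρ) 0 * w y‖ ≤ |Γ x y| * Cw := by
        intro ρ w Cw hρ hCw
        filter_upwards [ae_restrict_mem hBmeas] with y hy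
        have h0 : 0 ≤ max (Γ x y - 1/ρ) 0 := le_max_right _ _
        have h1 : max (Γ x y - 1/ρ) 0 ≤ |Γ x y| := by
          rcases max_cases (Γ x y - 1/ρ) 0 with ⟨he, _⟩ | ⟨he, _⟩
          · rw [he]
            have h2 : 0 < 1/ρ := by positivity
            calc Γ x y - 1/ρ ≤ Γ x y := by linarith
              _ ≤ |Γ x y| := le_abs_self _
          · rw [he]; exact abs_nonneg _
        rw [Real.norm_eq_abs, abs_mul, abs_of_nonneg h0]
        exact mul_le_mul h1 (by simpa [Real.norm_eq_abs] using hCw y hy) (abs_nonneg _)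
          (abs_nonneg _)
      have hbound_int : ∀ Cw : ℝ,
          Integrable (fun y => |Γ x y| * Cw) (volume.restrict (closedBall x (1:ℝ))) :=
        fun Cw => hΓB.abs.mul_const Cw
      have hJint : ∀ (ρ : ℝ) (w : EuclideanSpace ℝ (Fin n) → ℝ), Continuous w → 0 < ρ →
          IntegrableOn (fun y => max (Γ x y - 1/ρ) 0 * w y) (closedBall x (1:ℝ)) := by
        intro ρ w hw hρ
        obtain ⟨Cw, hCw⟩ := hBcomp.exists_bound_of_continuousOn hw.continuousOn
        exact (hbound_int Cw).mono' (hAESM ρ w hw) (hbd ρ w Cw hρ hCw)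
      have hinner : ∀ (ρ : ℝ) (w : EuclideanSpace ℝ (Fin n) → ℝ), 0 < ρ → ρ ≤ r0 →
          (∫ y in LBall Γ x ρ, (Γ x y - 1/ρ) * w y)
            = ∫ y in closedBall x (1:ℝ), max (Γ x y - 1/ρ) 0 * w y := by
        intro ρ w hρ hρr0
        have hSmeas : MeasurableSet {y : EuclideanSpace ℝ (Fin n) | y ≠ x ∧ 1/ρ < Γ x y} :=
          (hSopen ρ).measurableSet
        have hSsubB : {y : EuclideanSpace ℝ (Fin n) | y ≠ x ∧ 1/ρ < Γ x y} ⊆ closedBall x 1 :=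
          fun y hy => hΩ1 ρ hρ hρr0 (Or.inl hy)
        have h1 : (∫ y in LBall Γ x ρ, (Γ x y - 1/ρ) * w y)
            = ∫ y in {y : EuclideanSpace ℝ (Fin n) | y ≠ x ∧ 1/ρ < Γ x y},
                (Γ x y - 1/ρ) * w y := by
          apply setIntegral_congr_set
          rw [ae_eq_set]
          constructor
          · refine measure_mono_null (fun y hy => ?_) (measure_singleton x)
            rcases hy.1 with h | h
            · exact absurd h hy.2
            · exact h
          · exact measure_mono_null (fun y hy => (hy.2 (Or.inl hy.1)).elim) measure_empty
        have h2 : (∫ y in {y : EuclideanSpace ℝ (Fin n) | y ≠ x ∧ 1/ρ < Γ x y},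
              (Γ x y - 1/ρ) * w y)
            = ∫ y in {y : EuclideanSpace ℝ (Fin n) | y ≠ x ∧ 1/ρ < Γ x y},
                max (Γ x y - 1/ρ) 0 * w y := by
          refine setIntegral_congr_fun hSmeas fun y hy => ?_
          rw [max_eq_left (by linarith [hy.2] : (0:ℝ) ≤ Γ x y - 1/ρ)]
        have h3 : (∫ y in closedBall x (1:ℝ), max (Γ x y - 1/ρ) 0 * w y)
            = ∫ y in closedBall x (1:ℝ),
                Set.indicator {y : EuclideanSpace ℝ (Fin n) | y ≠ x ∧ 1/ρ < Γ x y}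
                  (fun y => max (Γ x y - 1/ρ) 0 * w y) y := by
          apply integral_congr_ae
          filter_upwards [ae_restrict_of_ae hxne] with y hyx
          by_cases hyS : y ∈ {y : EuclideanSpace ℝ (Fin n) | y ≠ x ∧ 1/ρ < Γ x y}
          · rw [Set.indicator_of_mem hyS]
          · rw [Set.indicator_of_notMem hyS]
            have h4 : ¬ 1/ρ < Γ x y := fun h => hyS ⟨hyx, h⟩
            rw [max_eq_right (by linarith), zero_mul]
        rw [h1, h2, h3, setIntegral_indicator hSmeas, Set.inter_eq_right.mpr hSsubB]
      have hJcont : ∀ (w : EuclideanSpace ℝ (Fin n) → ℝ), Continuous w →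
          ContinuousOn (fun ρ => ∫ y in closedBall x (1:ℝ), max (Γ x y - 1/ρ) 0 * w y)
            (Set.Ioi (0:ℝ)) := by
        intro w hw
        obtain ⟨Cw, hCw⟩ := hBcomp.exists_bound_of_continuousOn hw.continuousOn
        refine continuousOn_of_dominated (fun ρ _ => hAESM ρ w hw)
          (fun ρ hρ => hbd ρ w Cw hρ hCw) (hbound_int Cw) ?_
        filter_upwards with y
        have hc : ContinuousOn (fun ρ : ℝ => max (Γ x y - 1/ρ) 0) (Set.Ioi (0:ℝ)) := by
          have h1 : ContinuousOn (fun ρ : ℝ => Γ x y - 1/ρ) (Set.Ioi (0:ℝ)) :=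
            continuousOn_const.sub
              (continuousOn_const.div continuousOn_id fun ρ hρ => ne_of_gt hρ)
          exact h1.sup continuousOn_const
        exact hc.mul continuousOn_const
      have hJbd : ∀ (w : EuclideanSpace ℝ (Fin n) → ℝ) (Cw : ℝ), Continuous w →
          (∀ y ∈ closedBall x (1:ℝ), ‖w y‖ ≤ Cw) → ∀ ρ : ℝ, 0 < ρ →
          |∫ y in closedBall x (1:ℝ), max (Γ x y - 1/ρ) 0 * w y|
            ≤ ∫ y in closedBall x (1:ℝ), |Γ x y| * Cw := by
        intro w Cw hw hCw ρ hρ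
        calc |∫ y in closedBall x (1:ℝ), max (Γ x y - 1/ρ) 0 * w y|
            ≤ ∫ y in closedBall x (1:ℝ), ‖max (Γ x y - 1/ρ) 0 * w y‖ := by
              rw [← Real.norm_eq_abs]
              exact norm_integral_le_integral_norm _
          _ ≤ ∫ y in closedBall x (1:ℝ), |Γ x y| * Cw :=
              integral_mono_ae (hJint ρ w hw hρ).norm (hbound_int Cw) (hbd ρ w Cw hρ hCw)
      have hφint : ∀ (w : EuclideanSpace ℝ (Fin n) → ℝ), Continuous w → ∀ r : ℝ, 0 < r →
          IntegrableOn
            (fun ρ => ρ ^ α * ∫ y in closedBall x (1:ℝ), max (Γ x y - 1/ρ) 0 * w y)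
            (Set.Ioc 0 r) := by
        intro w hw r hr
        obtain ⟨Cw, hCw⟩ := hBcomp.exists_bound_of_continuousOn hw.continuousOn
        have hbint : IntegrableOn
            (fun ρ : ℝ => ρ ^ α * ∫ y in closedBall x (1:ℝ), |Γ x y| * Cw) (Set.Ioc 0 r) :=
          (intervalIntegral.intervalIntegrable_rpow' hα (a := 0) (b := r)).1.mul_const _
        refine hbint.mono' ?_ ?_
        · refine ContinuousOn.aestronglyMeasurable ?_ measurableSet_Ioc
          refine ContinuousOn.mul ?_ ((hJcont w hw).mono Set.Ioc_subset_Ioi_self)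
          exact fun ρ hρ =>
            (Real.continuousAt_rpow_const ρ α (Or.inl (ne_of_gt hρ.1))).continuousWithinAt
        · filter_upwards [ae_restrict_mem measurableSet_Ioc] with ρ hρ
          rw [Real.norm_eq_abs, abs_mul, abs_of_nonneg (Real.rpow_nonneg hρ.1.le α)]
          exact mul_le_mul_of_nonneg_left (hJbd w Cw hw hCw ρ hρ.1)
            (Real.rpow_nonneg hρ.1.le α)
      -- the ε-δ part
      obtain ⟨δ, hδpos, hfδ⟩ : ∃ δ : ℝ, 0 < δ ∧ ∀ y, dist y x ≤ δ → |f y - f x| ≤ ε := by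
        obtain ⟨d, hd, hball⟩ := Metric.continuousAt_iff.mp (hf.continuousAt (x := x)) ε hε
        refine ⟨d/2, by linarith, fun y hy => ?_⟩
        have h5 := hball (show dist y x < d by linarith)
        rw [Real.dist_eq] at h5; exact h5.le
      obtain ⟨ρ1, hρ1pos, hΩδ⟩ := hsmall δ hδpos
      refine ⟨min r0 ρ1, lt_min hr0pos hρ1pos, fun r hr hrle => ?_⟩
      have hrr0 : r ≤ r0 := hrle.trans (min_le_left _ _)
      have hrρ1 : r ≤ ρ1 := hrle.trans (min_le_right _ _)
      have hcr : 0 < (α+1)/r^(α+1) := div_pos (by linarith) (Real.rpow_pos_of_pos hr _)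
      have hkeyJ : ∀ ρ : ℝ, 0 < ρ → ρ ≤ r →
          |(∫ y in closedBall x (1:ℝ), max (Γ x y - 1/ρ) 0 * f y)
            - f x * ∫ y in closedBall x (1:ℝ), max (Γ x y - 1/ρ) 0|
          ≤ ε * ∫ y in closedBall x (1:ℝ), max (Γ x y - 1/ρ) 0 := by
        intro ρ hρ hρr
        have hint_f := hJint ρ f hf hρ
        have hint_1 : IntegrableOn (fun y => max (Γ x y - 1/ρ) 0) (closedBall x (1:ℝ)) := by
          simpa using hJint ρ (fun _ => (1:ℝ)) continuous_const hρ
        have hint_g := hJint ρ (fun y => f y - f x) (hf.sub continuous_const) hρ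
        have hsplit : (∫ y in closedBall x (1:ℝ), max (Γ x y - 1/ρ) 0 * f y)
            - f x * ∫ y in closedBall x (1:ℝ), max (Γ x y - 1/ρ) 0
            = ∫ y in closedBall x (1:ℝ), max (Γ x y - 1/ρ) 0 * (f y - f x) := by
          have heq2 : (fun y => max (Γ x y - 1/ρ) 0 * (f y - f x))
              = fun y => max (Γ x y - 1/ρ) 0 * f y - max (Γ x y - 1/ρ) 0 * f x := by
            funext y; ring
          rw [heq2, integral_sub hint_f (hint_1.mul_const (f x)),
            MeasureTheory.integral_mul_const]
          ring
        rw [hsplit]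
        have hptwise : ∀ᵐ y ∂(volume.restrict (closedBall x (1:ℝ))),
            ‖max (Γ x y - 1/ρ) 0 * (f y - f x)‖ ≤ ε * max (Γ x y - 1/ρ) 0 := by
          filter_upwards [ae_restrict_of_ae hxne] with y hyx
          rw [Real.norm_eq_abs, abs_mul, abs_of_nonneg (le_max_right _ _)]
          rcases lt_or_ge (1/ρ) (Γ x y) with hgt | hle
          · have hyΩ : y ∈ LBall Γ x ρ := Or.inl ⟨hyx, hgt⟩
            have hyδ : y ∈ closedBall x δ := hΩδ ρ hρ (hρr.trans hrρ1) hyΩ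
            have hfyx : |f y - f x| ≤ ε := hfδ y (mem_closedBall.mp hyδ)
            calc max (Γ x y - 1/ρ) 0 * |f y - f x| ≤ max (Γ x y - 1/ρ) 0 * ε :=
                mul_le_mul_of_nonneg_left hfyx (le_max_right _ _)
              _ = ε * max (Γ x y - 1/ρ) 0 := mul_comm _ _
          · rw [max_eq_right (by linarith)]
            simp
        calc |∫ y in closedBall x (1:ℝ), max (Γ x y - 1/ρ) 0 * (f y - f x)|
            ≤ ∫ y in closedBall x (1:ℝ), ‖max (Γ x y - 1/ρ) 0 * (f y - f x)‖ := by
              rw [← Real.norm_eq_abs]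
              exact norm_integral_le_integral_norm _
          _ ≤ ∫ y in closedBall x (1:ℝ), ε * max (Γ x y - 1/ρ) 0 :=
              integral_mono_ae hint_g.norm (hint_1.const_mul ε) hptwise
          _ = ε * ∫ y in closedBall x (1:ℝ), max (Γ x y - 1/ρ) 0 :=
              MeasureTheory.integral_const_mul ε _
      have hNf : Nr Γ α f x r = ((α+1)/r^(α+1)) *
          ∫ ρ in Set.Ioc (0:ℝ) r, ρ ^ α *
            ∫ y in closedBall x (1:ℝ), max (Γ x y - 1/ρ) 0 * f y := by
        simp only [Nr]
        rw [intervalIntegral.integral_of_le hr.le]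
        congr 1
        refine setIntegral_congr_fun measurableSet_Ioc fun ρ hρ => ?_
        rw [hinner ρ f hρ.1 (hρ.2.trans hrr0)]
      have hN1 : Qr Γ α x r = ((α+1)/r^(α+1)) *
          ∫ ρ in Set.Ioc (0:ℝ) r, ρ ^ α *
            ∫ y in closedBall x (1:ℝ), max (Γ x y - 1/ρ) 0 := by
        simp only [Qr, Nr, mul_one]
        rw [intervalIntegral.integral_of_le hr.le]
        congr 1
        refine setIntegral_congr_fun measurableSet_Ioc fun ρ hρ => ?_
        have h6 := hinner ρ (fun _ => (1:ℝ)) hρ.1 (hρ.2.trans hrr0)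
        simp only [mul_one] at h6
        rw [h6]
      have main : ∀ I J : ℝ,
          Nr Γ α f x r = ((α+1)/r^(α+1)) * I →
          Qr Γ α x r = ((α+1)/r^(α+1)) * J →
          |I - f x * J| ≤ ε * J →
          |Nr Γ α f x r - f x * Qr Γ α x r| ≤ ε * Qr Γ α x r := by
        intro I J hI hJ hIJ
        rw [hI, hJ]
        have heq3 : (α+1)/r^(α+1) * I - f x * ((α+1)/r^(α+1) * J)
            = ((α+1)/r^(α+1)) * (I - f x * J) := by ring
        rw [heq3, abs_mul, abs_of_pos hcr]
        calc ((α+1)/r^(α+1)) * |I - f x * J| ≤ ((α+1)/r^(α+1)) * (ε * J) :=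
            mul_le_mul_of_nonneg_left hIJ hcr.le
          _ = ε * ((α+1)/r^(α+1) * J) := by ring
      refine main _ _ hNf hN1 ?_
      have hif := hφint f hf r hr
      have hi1 : IntegrableOn
          (fun ρ => ρ ^ α * ∫ y in closedBall x (1:ℝ), max (Γ x y - 1/ρ) 0)
          (Set.Ioc 0 r) := by
        simpa using hφint (fun _ => (1:ℝ)) continuous_const r hr
      have hsub2 : (∫ ρ in Set.Ioc (0:ℝ) r, ρ ^ α *
            ∫ y in closedBall x (1:ℝ), max (Γ x y - 1/ρ) 0 * f y)
          - f x * ∫ ρ in Set.Ioc (0:ℝ) r, ρ ^ α *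
            ∫ y in closedBall x (1:ℝ), max (Γ x y - 1/ρ) 0
          = ∫ ρ in Set.Ioc (0:ℝ) r,
              ((ρ ^ α * ∫ y in closedBall x (1:ℝ), max (Γ x y - 1/ρ) 0 * f y)
              - f x * (ρ ^ α * ∫ y in closedBall x (1:ℝ), max (Γ x y - 1/ρ) 0)) := by
        rw [integral_sub hif (hi1.const_mul (f x)), MeasureTheory.integral_const_mul]
      rw [hsub2]
      have hptρ : ∀ᵐ ρ ∂(volume.restrict (Set.Ioc (0:ℝ) r)),
          ‖(ρ ^ α * ∫ y in closedBall x (1:ℝ), max (Γ x y - 1/ρ) 0 * f y)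
            - f x * (ρ ^ α * ∫ y in closedBall x (1:ℝ), max (Γ x y - 1/ρ) 0)‖
          ≤ ε * (ρ ^ α * ∫ y in closedBall x (1:ℝ), max (Γ x y - 1/ρ) 0) := by
        filter_upwards [ae_restrict_mem measurableSet_Ioc] with ρ hρ
        have hρα : (0:ℝ) ≤ ρ ^ α := Real.rpow_nonneg hρ.1.le α
        have heq4 : (ρ ^ α * ∫ y in closedBall x (1:ℝ), max (Γ x y - 1/ρ) 0 * f y)
            - f x * (ρ ^ α * ∫ y in closedBall x (1:ℝ), max (Γ x y - 1/ρ) 0)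
            = ρ ^ α * ((∫ y in closedBall x (1:ℝ), max (Γ x y - 1/ρ) 0 * f y)
              - f x * ∫ y in closedBall x (1:ℝ), max (Γ x y - 1/ρ) 0) := by ring
        rw [Real.norm_eq_abs, heq4, abs_mul, abs_of_nonneg hρα]
        calc ρ ^ α * |(∫ y in closedBall x (1:ℝ), max (Γ x y - 1/ρ) 0 * f y)
              - f x * ∫ y in closedBall x (1:ℝ), max (Γ x y - 1/ρ) 0|
            ≤ ρ ^ α * (ε * ∫ y in closedBall x (1:ℝ), max (Γ x y - 1/ρ) 0) :=
              mul_le_mul_of_nonneg_left (hkeyJ ρ hρ.1 hρ.2) hρα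
          _ = ε * (ρ ^ α * ∫ y in closedBall x (1:ℝ), max (Γ x y - 1/ρ) 0) := by ring
      calc |∫ ρ in Set.Ioc (0:ℝ) r,
            ((ρ ^ α * ∫ y in closedBall x (1:ℝ), max (Γ x y - 1/ρ) 0 * f y)
              - f x * (ρ ^ α * ∫ y in closedBall x (1:ℝ), max (Γ x y - 1/ρ) 0))|
          ≤ ∫ ρ in Set.Ioc (0:ℝ) r,
            ‖(ρ ^ α * ∫ y in closedBall x (1:ℝ), max (Γ x y - 1/ρ) 0 * f y)
              - f x * (ρ ^ α * ∫ y in closedBall x (1:ℝ), max (Γ x y - 1/ρ) 0)‖ := by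
            rw [← Real.norm_eq_abs]
            exact norm_integral_le_integral_norm _
        _ ≤ ∫ ρ in Set.Ioc (0:ℝ) r,
            ε * (ρ ^ α * ∫ y in closedBall x (1:ℝ), max (Γ x y - 1/ρ) 0) :=
            integral_mono_ae (hif.sub (hi1.const_mul (f x))).norm (hi1.const_mul ε) hptρ
        _ = ε * ∫ ρ in Set.Ioc (0:ℝ) r,
            ρ ^ α * ∫ y in closedBall x (1:ℝ), max (Γ x y - 1/ρ) 0 :=
            MeasureTheory.integral_const_mul ε _
  -- conclude
  rw [Metric.tendsto_nhds]
  intro ε hε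
  obtain ⟨r1, hr1, hkey⟩ := key (ε/2) (by linarith)
  filter_upwards [Ioc_mem_nhdsGT hr1] with r hrmem
  obtain ⟨hr0, hrle⟩ := hrmem
  have hQr := hQ x r hr0
  have hM : M r u x - u x = -(Nr Γ α f x r) := by
    have h := hrep x r hr0; linarith
  rw [Real.dist_eq, hM]
  have hne : Qr Γ α x r ≠ 0 := ne_of_gt hQr
  have heq : -Nr Γ α f x r / Qr Γ α x r - -f x
      = -((Nr Γ α f x r - f x * Qr Γ α x r) / Qr Γ α x r) := by
    field_simp
    ring
  rw [heq, abs_neg, abs_div, abs_of_pos hQr]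
  have h2 := hkey r hr0 hrle
  calc |Nr Γ α f x r - f x * Qr Γ α x r| / Qr Γ α x r
      ≤ (ε/2 * Qr Γ α x r) / Qr Γ α x r := by gcongr
    _ = ε/2 := by
      field_simp
    _ < ε := by linarith
end
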